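/- arXiv:2303.15044 — 3 statements merged into one kernel-verified Lean document; each statement's English description precedes it below -/
import Mathlib

section
/- Let y : [0,∞) → [0,∞) be differentiable with y'(t) + α y(t) ≤ G(t) for all t ≥ 0, where α > 0 and G : [0,∞) → [0,∞) is integrable on (0,∞). Then y(t) → 0 as t → ∞. -/
open MeasureTheory Set Filter

/-!
With the integrating factor `exp (α t)` the inequality becomes `(exp (α t) y t)' ≤ exp (α t) G t`,
so `y t ≤ exp (-α t) y 0 + ∫₀ᵗ exp (α (s - t)) G s`. The first term decays, and so does the
second by dominated convergence: its integrand is bounded by `|G|` and tends to `0` pointwise.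
-/

theorem exp_mul_sub_le_integral_of_deriv_add_mul_le {y y' G : ℝ → ℝ} {α a b : ℝ} (hab : a ≤ b)
    (hderiv : ∀ x ∈ Icc a b, HasDerivAt y (y' x) x) (hG : IntegrableOn G (Icc a b))
    (hineq : ∀ x ∈ Ioo a b, y' x + α * y x ≤ G x) :
    Real.exp (α * b) * y b - Real.exp (α * a) * y a ≤ ∫ s in a..b, Real.exp (α * s) * G s := by
  have hdiff : ∀ x ∈ Icc a b, HasDerivAt (fun s => Real.exp (α * s) * y s)
      (Real.exp (α * x) * (y' x + α * y x)) x := by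
    intro x hx
    have hexp : HasDerivAt (fun s => Real.exp (α * s)) (Real.exp (α * x) * α) x := by
      simpa using ((hasDerivAt_id x).const_mul α).exp
    exact (hexp.mul (hderiv x hx)).congr_deriv (by ring)
  refine intervalIntegral.sub_le_integral_of_hasDeriv_right_of_le hab
    (fun x hx => (hdiff x hx).continuousAt.continuousWithinAt)
    (fun x hx => (hdiff x (Ioo_subset_Icc_self hx)).hasDerivWithinAt)
    (hG.continuousOn_mul (by fun_prop) isCompact_Icc) (fun x hx => ?_)
  exact mul_le_mul_of_nonneg_left (hineq x hx) (Real.exp_pos _).le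

theorem le_exp_mul_add_integral_of_deriv_add_mul_le {y y' G : ℝ → ℝ} {α a t : ℝ} (hat : a ≤ t)
    (hderiv : ∀ x ∈ Icc a t, HasDerivAt y (y' x) x) (hG : IntegrableOn G (Icc a t))
    (hineq : ∀ x ∈ Ioo a t, y' x + α * y x ≤ G x) :
    y t ≤ Real.exp (α * (a - t)) * y a + ∫ s in a..t, Real.exp (α * (s - t)) * G s := by
  have key := exp_mul_sub_le_integral_of_deriv_add_mul_le hat hderiv hG hineq
  have hkernel : ∀ s, Real.exp (α * (s - t)) = Real.exp (-(α * t)) * Real.exp (α * s) := by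
    intro s
    rw [← Real.exp_add]
    ring_nf
  simp only [hkernel, mul_assoc, intervalIntegral.integral_const_mul]
  have hcancel : Real.exp (-(α * t)) * Real.exp (α * t) = 1 := by
    rw [← Real.exp_add, neg_add_cancel, Real.exp_zero]
  calc y t = Real.exp (-(α * t)) * (Real.exp (α * t) * y t) := by
        rw [← mul_assoc, hcancel, one_mul]
    _ ≤ Real.exp (-(α * t)) * (Real.exp (α * a) * y a + ∫ s in a..t, Real.exp (α * s) * G s) :=
        mul_le_mul_of_nonneg_left (by linarith) (Real.exp_pos _).le
    _ = _ := mul_add _ _ _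

theorem tendsto_exp_mul_sub_atTop {α : ℝ} (hα : 0 < α) (s : ℝ) :
    Tendsto (fun t => Real.exp (α * (s - t))) atTop (nhds 0) :=
  Real.tendsto_exp_atBot.comp
    ((tendsto_atBot_add_const_left _ s tendsto_neg_atTop_atBot).const_mul_atBot hα)

theorem tendsto_integral_exp_mul_sub_mul_atTop {G : ℝ → ℝ} {α a : ℝ} (hα : 0 < α)
    (hG : IntegrableOn G (Ioi a)) :
    Tendsto (fun t => ∫ s in a..t, Real.exp (α * (s - t)) * G s) atTop (nhds 0) := by
  set F : ℝ → ℝ → ℝ := fun t => (Iic t).indicator fun s => Real.exp (α * (s - t)) * G s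
  have hF : ∀ᶠ t in atTop,
      ∫ s in Ioi a, F t s = ∫ s in a..t, Real.exp (α * (s - t)) * G s := by
    filter_upwards [eventually_ge_atTop a] with t hat
    rw [integral_indicator measurableSet_Iic, Measure.restrict_restrict measurableSet_Iic,
      intervalIntegral.integral_of_le hat, Iic_inter_Ioi]
  have hkernel_le : ∀ {s t : ℝ}, s ≤ t → Real.exp (α * (s - t)) ≤ 1 := fun hst =>
    Real.exp_le_one_iff.2 (mul_nonpos_of_nonneg_of_nonpos hα.le (sub_nonpos.2 hst))
  have hlim : Tendsto (fun t => ∫ s in Ioi a, F t s) atTop (nhds (∫ _ in Ioi a, (0 : ℝ))) := by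
    refine tendsto_integral_filter_of_dominated_convergence (fun s => ‖G s‖)
      (Eventually.of_forall fun t => ?_) (Eventually.of_forall fun t => ?_) hG.norm
      (ae_of_all _ fun s => ?_)
    · exact ((by fun_prop : Continuous fun s => Real.exp (α * (s - t))).aestronglyMeasurable.mul
        hG.aestronglyMeasurable).indicator measurableSet_Iic
    · refine ae_of_all _ fun s => ?_
      by_cases hst : s ≤ t
      · simp only [F, indicator_of_mem (mem_Iic.2 hst), norm_mul, Real.norm_eq_abs,
          abs_of_pos (Real.exp_pos _)]
        exact mul_le_of_le_one_left (abs_nonneg _) (hkernel_le hst)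
      · simp only [F, indicator_of_notMem (notMem_Iic.2 (not_le.1 hst)), norm_zero]
        exact norm_nonneg _
    · have hdecay := (tendsto_exp_mul_sub_atTop hα s).mul_const (G s)
      rw [zero_mul] at hdecay
      refine hdecay.congr' ?_
      filter_upwards [eventually_ge_atTop s] with t hst
      simp only [F, indicator_of_mem (mem_Iic.2 hst)]
  rw [integral_zero] at hlim
  exact hlim.congr' hF

theorem stmt1_general (y y' G : ℝ → ℝ) (α : ℝ) (hα : 0 < α)
    (hy : ∀ t, 0 ≤ t → 0 ≤ y t)
    (hderiv : ∀ t, 0 ≤ t → HasDerivAt y (y' t) t)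
    (hGint : IntegrableOn G (Ioi (0:ℝ)))
    (hineq : ∀ t, 0 ≤ t → y' t + α * y t ≤ G t) :
    Tendsto y atTop (nhds 0) := by
  have hbound : ∀ᶠ t in atTop,
      y t ≤ Real.exp (α * (0 - t)) * y 0 + ∫ s in (0:ℝ)..t, Real.exp (α * (s - t)) * G s := by
    filter_upwards [eventually_ge_atTop 0] with t ht
    refine le_exp_mul_add_integral_of_deriv_add_mul_le ht (fun x hx => hderiv x hx.1) ?_
      (fun x hx => hineq x hx.1.le)
    exact (integrableOn_Icc_iff_integrableOn_Ioc).2 (hGint.mono_set Ioc_subset_Ioi_self)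
  have hlim := ((tendsto_exp_mul_sub_atTop hα 0).mul_const (y 0)).add
    (tendsto_integral_exp_mul_sub_mul_atTop hα hGint)
  rw [zero_mul, zero_add] at hlim
  exact squeeze_zero' (eventually_ge_atTop 0 |>.mono hy) hbound hlim

theorem stmt1 (y y' G : ℝ → ℝ) (α : ℝ) (hα : 0 < α)
    (hy : ∀ t, 0 ≤ t → 0 ≤ y t)
    (hderiv : ∀ t, 0 ≤ t → HasDerivAt y (y' t) t)
    (hG : ∀ t, 0 ≤ t → 0 ≤ G t)
    (hGint : IntegrableOn G (Ioi (0:ℝ)))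
    (hineq : ∀ t, 0 ≤ t → y' t + α * y t ≤ G t) :
    Tendsto y atTop (nhds 0) :=
  stmt1_general y y' G α hα hy hderiv hGint hineq
end

section
/- Let y : [0,∞) → [0,∞) be differentiable, α > 0, and f, g ∈ L²(0,∞) nonnegative, with y'(t) + α y(t) ≤ c f(t) g(t) for all t ≥ 0 and some c > 0. Then lim_{t→∞} y(t) = 0. -/
/-!
Multiplying by the integrating factor `exp (α t)` turns `y' + α y ≤ h` into the Grönwall bound
`y b ≤ y a * exp (-α (b - a)) + ∫ₐᵇ |h|`. With `a = 0` this shows that `y` is bounded, and with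
`a = b / 2` both terms tend to zero: the first by exponential decay, the second because it is
dominated by the tail `∫_{b/2}^∞ |h|` of an integrable function. Here `h = c f g` is integrable
by the Cauchy–Schwarz inequality.
-/

open MeasureTheory Set Filter Real Topology

theorem le_mul_exp_add_integral_of_deriv_add_mul_le {y y' h : ℝ → ℝ} {α a b : ℝ}
    (hα : 0 ≤ α) (hab : a ≤ b) (hderiv : ∀ t ∈ Icc a b, HasDerivAt y (y' t) t)
    (hint : IntegrableOn h (Icc a b)) (hh : ∀ t ∈ Icc a b, 0 ≤ h t)
    (hineq : ∀ t ∈ Icc a b, y' t + α * y t ≤ h t) :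
    y b ≤ y a * exp (-(α * (b - a))) + ∫ s in a..b, h s := by
  have hweighted : y b * exp (α * b) - y a * exp (α * a) ≤ ∫ s in a..b, exp (α * b) * h s := by
    refine intervalIntegral.sub_le_integral_of_hasDeriv_right_of_le hab
      (g' := fun t => y' t * exp (α * t) + y t * (exp (α * t) * (α * 1)))
      (fun t ht => ((hderiv t ht).continuousAt.mul (by fun_prop)).continuousWithinAt)
      (fun t ht => ((hderiv t (Ioo_subset_Icc_self ht)).mul
        ((hasDerivAt_id t).const_mul α).exp).hasDerivWithinAt)
      (hint.const_mul _) fun t ht => ?_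
    have ht' := Ioo_subset_Icc_self ht
    calc y' t * exp (α * t) + y t * (exp (α * t) * (α * 1))
        = (y' t + α * y t) * exp (α * t) := by ring
      _ ≤ h t * exp (α * b) := by
        gcongr
        exacts [hh t ht', hineq t ht', ht.2.le]
      _ = exp (α * b) * h t := mul_comm _ _
  rw [intervalIntegral.integral_const_mul] at hweighted
  have hexp : exp (-(α * (b - a))) * exp (α * b) = exp (α * a) := by
    rw [← exp_add]; ring_nf
  refine le_of_mul_le_mul_right ?_ (exp_pos (α * b))
  linear_combination hweighted - y a * hexp

theorem intervalIntegral_le_setIntegral_Ioi {h : ℝ → ℝ} {a b : ℝ} (hab : a ≤ b)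
    (hint : IntegrableOn h (Ioi a)) (hh : ∀ t ∈ Ioi a, 0 ≤ h t) :
    ∫ s in a..b, h s ≤ ∫ s in Ioi a, h s := by
  rw [intervalIntegral.integral_of_le hab]
  exact setIntegral_mono_set hint ((ae_restrict_mem measurableSet_Ioi).mono hh)
    (Eventually.of_forall Ioc_subset_Ioi_self)

theorem tendsto_zero_of_deriv_add_mul_le_of_integrableOn {y y' h : ℝ → ℝ} {α : ℝ} (hα : 0 < α)
    (hy : ∀ t, 0 ≤ t → 0 ≤ y t) (hderiv : ∀ t, 0 ≤ t → HasDerivAt y (y' t) t)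
    (hint : IntegrableOn h (Ioi 0)) (hineq : ∀ t, 0 ≤ t → y' t + α * y t ≤ h t) :
    Tendsto y atTop (𝓝 0) := by
  have gronwall : ∀ a b, 0 ≤ a → a ≤ b →
      y b ≤ y a * exp (-(α * (b - a))) + ∫ s in Ioi a, |h s| := by
    intro a b ha hab
    have hint_a : IntegrableOn (fun s => |h s|) (Ioi a) :=
      IntegrableOn.mono_set hint.abs (Ioi_subset_Ioi ha)
    have := le_mul_exp_add_integral_of_deriv_add_mul_le hα.le hab
      (fun t ht => hderiv t (ha.trans ht.1))
      ((integrableOn_Icc_iff_integrableOn_Ioc).2 (hint_a.mono_set Ioc_subset_Ioi_self))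
      (fun t _ => abs_nonneg (h t))
      (fun t ht => (hineq t (ha.trans ht.1)).trans (le_abs_self _))
    linarith [intervalIntegral_le_setIntegral_Ioi hab hint_a fun t _ => abs_nonneg (h t)]
  set M := y 0 + ∫ s in Ioi 0, |h s|
  have hbounded : ∀ t, 0 ≤ t → y t ≤ M := by
    intro t ht
    have := gronwall 0 t le_rfl ht
    have hexp : exp (-(α * (t - 0))) ≤ 1 := exp_le_one_iff.2 (by nlinarith)
    nlinarith [hy 0 le_rfl]
  have hupper : ∀ b, 0 ≤ b → y b ≤ M * exp (-(α * (b / 2))) + ∫ s in Ioi (b / 2), |h s| := by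
    intro b hb
    have := gronwall (b / 2) b (by linarith) (by linarith)
    rw [show b - b / 2 = b / 2 by ring] at this
    nlinarith [hbounded (b / 2) (by linarith), exp_pos (-(α * (b / 2)))]
  have hhalf : Tendsto (fun b : ℝ => b / 2) atTop atTop := tendsto_id.atTop_div_const two_pos
  have hlim : Tendsto (fun b => M * exp (-(α * (b / 2))) + ∫ s in Ioi (b / 2), |h s|)
      atTop (𝓝 0) := by
    simpa using ((tendsto_exp_neg_atTop_nhds_zero.comp
      (hhalf.const_mul_atTop hα)).const_mul M).add (tendsto_integral_Ioi_zero hhalf)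
  exact tendsto_of_tendsto_of_tendsto_of_le_of_le' tendsto_const_nhds hlim
    ((eventually_ge_atTop 0).mono hy) ((eventually_ge_atTop 0).mono hupper)

theorem stmt8_general (y y' f g : ℝ → ℝ) (α c : ℝ) (hα : 0 < α)
    (hy : ∀ t, 0 ≤ t → 0 ≤ y t)
    (hderiv : ∀ t, 0 ≤ t → HasDerivAt y (y' t) t)
    (hfm : Measurable f) (hgm : Measurable g)
    (hf2 : IntegrableOn (fun s => (f s) ^ 2) (Ioi (0:ℝ)))
    (hg2 : IntegrableOn (fun s => (g s) ^ 2) (Ioi (0:ℝ)))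
    (hineq : ∀ t, 0 ≤ t → y' t + α * y t ≤ c * f t * g t) :
    Tendsto y atTop (nhds 0) := by
  have hfg : IntegrableOn (f * g) (Ioi 0) :=
    ((memLp_two_iff_integrable_sq hfm.aestronglyMeasurable).2 hf2).integrable_mul
      ((memLp_two_iff_integrable_sq hgm.aestronglyMeasurable).2 hg2)
  refine tendsto_zero_of_deriv_add_mul_le_of_integrableOn hα hy hderiv (hfg.const_mul c) ?_
  simpa only [Pi.mul_apply, mul_assoc] using hineq

theorem stmt8 (y y' f g : ℝ → ℝ) (α c : ℝ) (hα : 0 < α) (hc : 0 < c)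
    (hy : ∀ t, 0 ≤ t → 0 ≤ y t)
    (hderiv : ∀ t, 0 ≤ t → HasDerivAt y (y' t) t)
    (hfm : Measurable f) (hgm : Measurable g)
    (hfnn : ∀ t, 0 ≤ t → 0 ≤ f t) (hgnn : ∀ t, 0 ≤ t → 0 ≤ g t)
    (hf2 : IntegrableOn (fun s => (f s) ^ 2) (Ioi (0:ℝ)))
    (hg2 : IntegrableOn (fun s => (g s) ^ 2) (Ioi (0:ℝ)))
    (hineq : ∀ t, 0 ≤ t → y' t + α * y t ≤ c * f t * g t) :
    Tendsto y atTop (nhds 0) :=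
  stmt8_general y y' f g α c hα hy hderiv hfm hgm hf2 hg2 hineq
end

section
/- Let y : [0,∞) → [0,∞) be differentiable with y'(t) + 2M y(t) ≤ h(t), where M > 0 and h ≥ 0 is integrable on (0,∞). Then y is bounded on [0,∞) by y(0) + ∫₀^∞ h(s) ds, and y(t) → 0 as t → ∞. -/
/-!
Integrating the inequality over `[a, b]` gives `y b - y a + 2M ∫ₐᵇ y ≤ ∫ₐᵇ h`. Dropping the
middle term bounds `y b` by `y a` plus the tail `∫ₐ^∞ h`; taking `a = 0` and using `y b ≥ 0`
instead bounds `∫₀ᵇ y` uniformly in `b`, so `y` is integrable on `(0, ∞)` and hence takes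
arbitrarily small values arbitrarily late. After such a late time `a`, `y` stays below
`y a + ∫ₐ^∞ h`, which is small.
-/

open MeasureTheory Set Filter Topology

theorem sub_add_mul_setIntegral_le_of_hasDerivAt {y y' h : ℝ → ℝ} {c a b : ℝ} (hab : a ≤ b)
    (hderiv : ∀ t ∈ Icc a b, HasDerivAt y (y' t) t) (hh : IntegrableOn h (Ioc a b))
    (hineq : ∀ t ∈ Ioo a b, y' t + c * y t ≤ h t) :
    y b - y a + c * ∫ t in Ioc a b, y t ≤ ∫ t in Ioc a b, h t := by
  have hcont : ContinuousOn y (Icc a b) := fun t ht =>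
    (hderiv t ht).continuousAt.continuousWithinAt
  have hy : IntegrableOn y (Ioc a b) := hcont.integrableOn_Icc.mono_set Ioc_subset_Icc_self
  have hftc := intervalIntegral.sub_le_integral_of_hasDeriv_right_of_le
    (φ := fun t => h t - c * y t) hab hcont
    (fun t ht => (hderiv t (Ioo_subset_Icc_self ht)).hasDerivWithinAt)
    ((integrableOn_Icc_iff_integrableOn_Ioc).2 (hh.sub (hy.const_mul c)))
    (fun t ht => by linarith [hineq t ht])
  rw [intervalIntegral.integral_of_le hab, integral_sub hh (hy.const_mul c),
    integral_const_mul] at hftc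
  linarith

theorem setIntegral_Ioc_le_setIntegral_Ioi {f : ℝ → ℝ} {a : ℝ} (b : ℝ)
    (hf : IntegrableOn f (Ioi a)) (hnn : ∀ t ∈ Ioi a, 0 ≤ f t) :
    ∫ t in Ioc a b, f t ≤ ∫ t in Ioi a, f t :=
  setIntegral_mono_set hf ((ae_restrict_iff' measurableSet_Ioi).2 (.of_forall hnn))
    Ioc_subset_Ioi_self.eventuallyLE

theorem integrableOn_Ioi_of_nonneg_of_setIntegral_Ioc_le {f : ℝ → ℝ} {a C : ℝ}
    (hf : ∀ t ∈ Ioi a, 0 ≤ f t) (hint : ∀ b, IntegrableOn f (Ioc a b))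
    (hbound : ∀ b, a ≤ b → ∫ t in Ioc a b, f t ≤ C) : IntegrableOn f (Ioi a) := by
  refine integrableOn_Ioi_of_intervalIntegral_norm_bounded C a hint tendsto_id
    ((eventually_ge_atTop a).mono fun b hab => ?_)
  rw [intervalIntegral.integral_of_le hab,
    setIntegral_congr_fun measurableSet_Ioc fun t ht => Real.norm_of_nonneg (hf t ht.1)]
  exact hbound b hab

theorem frequently_norm_lt_of_integrableOn_Ioi {E : Type*} [NormedAddCommGroup E]
    {f : ℝ → E} {a ε : ℝ} (hf : IntegrableOn f (Ioi a)) (hε : 0 < ε) :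
    ∃ᶠ t in atTop, ‖f t‖ < ε := by
  intro hlarge
  obtain ⟨T, hT⟩ := eventually_atTop.1 (hlarge.mono fun t ht => not_lt.1 ht)
  have hconst : IntegrableOn (fun _ => ε) (Ioi (max a T)) :=
    (hf.mono_set (Ioi_subset_Ioi (le_max_left a T))).norm.mono' aestronglyMeasurable_const
      ((ae_restrict_iff' measurableSet_Ioi).2 (.of_forall fun t ht => by
        rw [Real.norm_of_nonneg hε.le]
        exact hT t ((le_max_right a T).trans ht.le)))
  simp [hε.ne', Real.volume_Ioi] at hconst

theorem tendsto_setIntegral_Ioi_atTop_zero {E : Type*} [NormedAddCommGroup E]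
    [NormedSpace ℝ E] {f : ℝ → E} {a : ℝ} (hf : IntegrableOn f (Ioi a)) :
    Tendsto (fun T => ∫ t in Ioi T, f t) atTop (𝓝 0) := by
  have hlim := tendsto_setIntegral_of_antitone (μ := volume) (f := f)
    (fun T => measurableSet_Ioi) (fun _ _ h => Ioi_subset_Ioi h) ⟨a, hf⟩
  have hempty : ⋂ T : ℝ, Ioi T = ∅ := iInter_eq_empty_iff.2 fun t => ⟨t, lt_irrefl t⟩
  rwa [hempty, setIntegral_empty] at hlim

theorem tendsto_zero_of_frequently_lt_of_le_add {f τ : ℝ → ℝ} {a₀ : ℝ}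
    (hf : ∀ t, a₀ ≤ t → 0 ≤ f t) (hsmall : ∀ ε > 0, ∃ᶠ t in atTop, f t < ε)
    (hτ : Tendsto τ atTop (𝓝 0)) (hle : ∀ a t, a₀ ≤ a → a ≤ t → f t ≤ f a + τ a) :
    Tendsto f atTop (𝓝 0) := by
  refine tendsto_order.2
    ⟨fun ε hε => (eventually_ge_atTop a₀).mono fun t ht => hε.trans_le (hf t ht),
      fun ε hε => ?_⟩
  obtain ⟨a, ⟨ha₀, hτa⟩, hfa⟩ := ((eventually_ge_atTop a₀).and
    (hτ.eventually (gt_mem_nhds (half_pos hε)))).and_frequently (hsmall _ (half_pos hε)) |>.exists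
  exact eventually_atTop.2 ⟨a, fun t ht => by linarith [hle a t ha₀ ht]⟩

theorem stmt14 (y y' h : ℝ → ℝ) (M : ℝ) (hM : 0 < M)
    (hy : ∀ t, 0 ≤ t → 0 ≤ y t)
    (hderiv : ∀ t, 0 ≤ t → HasDerivAt y (y' t) t)
    (hhnn : ∀ t, 0 ≤ t → 0 ≤ h t)
    (hhint : IntegrableOn h (Ioi (0:ℝ)))
    (hineq : ∀ t, 0 ≤ t → y' t + 2 * M * y t ≤ h t) :
    (∀ t, 0 ≤ t → y t ≤ y 0 + ∫ s in Ioi (0:ℝ), h s) ∧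
      Tendsto y atTop (nhds 0) := by
  have hh (a : ℝ) (ha : 0 ≤ a) : IntegrableOn h (Ioi a) := hhint.mono_set (Ioi_subset_Ioi ha)
  have energy (a b : ℝ) (ha : 0 ≤ a) (hab : a ≤ b) :
      y b - y a + 2 * M * ∫ t in Ioc a b, y t ≤ ∫ t in Ioi a, h t :=
    (sub_add_mul_setIntegral_le_of_hasDerivAt hab (fun t ht => hderiv t (ha.trans ht.1))
      ((hh a ha).mono_set Ioc_subset_Ioi_self) (fun t ht => hineq t (ha.trans ht.1.le))).trans
      (setIntegral_Ioc_le_setIntegral_Ioi b (hh a ha) fun t ht => hhnn t (ha.trans ht.le))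
  have growth (a b : ℝ) (ha : 0 ≤ a) (hab : a ≤ b) : y b ≤ y a + ∫ t in Ioi a, h t := by
    have : 0 ≤ 2 * M * ∫ t in Ioc a b, y t := mul_nonneg (by positivity)
      (setIntegral_nonneg measurableSet_Ioc fun t ht => hy t (ha.trans ht.1.le))
    linarith [energy a b ha hab]
  have hyint : IntegrableOn y (Ioi 0) := by
    refine integrableOn_Ioi_of_nonneg_of_setIntegral_Ioc_le
      (C := (y 0 + ∫ t in Ioi 0, h t) / (2 * M)) (fun t ht => hy t ht.le)
      (fun b => (ContinuousOn.integrableOn_Icc fun t ht =>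
        (hderiv t ht.1).continuousAt.continuousWithinAt).mono_set Ioc_subset_Icc_self)
      (fun b hb => ?_)
    rw [le_div_iff₀ (by positivity)]
    linarith [energy 0 b le_rfl hb, hy b hb]
  refine ⟨fun t ht => growth 0 t le_rfl ht, ?_⟩
  exact tendsto_zero_of_frequently_lt_of_le_add hy
    (fun ε hε => (frequently_norm_lt_of_integrableOn_Ioi hyint hε).mono
      fun t ht => (le_abs_self _).trans_lt ht)
    (tendsto_setIntegral_Ioi_atTop_zero hhint) growth
end
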